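/- Let X₁, …, X_d be independent identically distributed real random variables with E X₁ = 0, E X₁² = 1 and E X₁⁴ < ∞, and let μ be the distribution of X = (X₁,…,X_d)ᵀ in ℝ^d. Then for all symmetric matrices A ∈ ℝ^{d×d}_sym, T_μ(A) = 2A + Tr(A)·I + (E X₁⁴ − 3)·diag(A), where diag(A) is the diagonal matrix whose diagonal entries agree with those of A. -/

import Mathlib

open MeasureTheory
open scoped ENNReal RealInnerProductSpace Classical

noncomputable section

/-- The outer product `x xᵀ` of a vector in Euclidean space, as a matrix. -/
def outer {d : ℕ} (x : EuclideanSpace ℝ (Fin d)) : Matrix (Fin d) (Fin d) ℝ :=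
  Matrix.of fun i j => x i * x j

/-- The trace inner product `⟨A, B⟩ = Tr (A B)` on symmetric matrices. -/
def minner {d : ℕ} (A B : Matrix (Fin d) (Fin d) ℝ) : ℝ :=
  Matrix.trace (A * B)

/-- The Frobenius norm of a matrix. -/
def frobNorm {d : ℕ} (M : Matrix (Fin d) (Fin d) ℝ) : ℝ :=
  Real.sqrt (∑ i, ∑ j, (M i j) ^ 2)

/-- Entrywise integral of a matrix-valued function. -/
def mIntegral {d : ℕ} (μ : Measure (EuclideanSpace ℝ (Fin d)))
    (F : EuclideanSpace ℝ (Fin d) → Matrix (Fin d) (Fin d) ℝ) :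
    Matrix (Fin d) (Fin d) ℝ :=
  Matrix.of fun i j => ∫ x, F x i j ∂μ

/-- The fourth moment operator `T_μ (A) = ∫ ⟨A, xxᵀ⟩ xxᵀ dμ(x)`. -/
def fourthMomentOp {d : ℕ} (μ : Measure (EuclideanSpace ℝ (Fin d)))
    (A : Matrix (Fin d) (Fin d) ℝ) : Matrix (Fin d) (Fin d) ℝ :=
  mIntegral μ (fun x => minner A (outer x) • outer x)

/-- The second moment matrix `B = ∫ xxᵀ dμ(x)`. -/
def secondMoment {d : ℕ} (μ : Measure (EuclideanSpace ℝ (Fin d))) :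
    Matrix (Fin d) (Fin d) ℝ :=
  mIntegral μ outer

/-- `lam : ℕ → ℝ` lists the eigenvalues (with multiplicity) of the fourth moment operator
`T_μ`, viewed as an operator on the `d(d+1)/2`-dimensional inner product space of symmetric
matrices, in descending order, padded by `0` beyond index `d(d+1)/2`. -/
def IsEigenSeq {d : ℕ} (μ : Measure (EuclideanSpace ℝ (Fin d))) (lam : ℕ → ℝ) : Prop :=
  Antitone lam ∧ (∀ i, d * (d + 1) / 2 ≤ i → lam i = 0) ∧
  ∃ b : Fin (d * (d + 1) / 2) → Matrix (Fin d) (Fin d) ℝ,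
    (∀ i, (b i).IsSymm) ∧
    (∀ i j, minner (b i) (b j) = if i = j then 1 else 0) ∧
    (∀ A : Matrix (Fin d) (Fin d) ℝ, A.IsSymm → A ∈ Submodule.span ℝ (Set.range b)) ∧
    (∀ i : Fin (d * (d + 1) / 2), fourthMomentOp μ (b i) = lam i • b i)

/-- The second order separation parameter `s(μ)`. -/
def sep {d : ℕ} (μ : Measure (EuclideanSpace ℝ (Fin d))) : ℝ :=
  (1 / 2) * sSup { r : ℝ | ∃ μ₁ μ₂ : Measure (EuclideanSpace ℝ (Fin d)),
    IsProbabilityMeasure μ₁ ∧ IsProbabilityMeasure μ₂ ∧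
    μ = (2 : ℝ≥0∞)⁻¹ • μ₁ + (2 : ℝ≥0∞)⁻¹ • μ₂ ∧
    r = frobNorm (secondMoment μ₁ - secondMoment μ₂) }

/-- The standard Gaussian measure `N(0, I)` on `ℝ^d`. -/
def stdGaussian (d : ℕ) : Measure (EuclideanSpace ℝ (Fin d)) :=
  (Measure.pi fun _ : Fin d => ProbabilityTheory.gaussianReal 0 1).map
    (MeasurableEquiv.toLp 2 (Fin d → ℝ))

/-- The centered Gaussian measure `N(0, B)` on `ℝ^d` with positive semidefinite
covariance matrix `B`, obtained as the pushforward of `N(0, I)` by `B^{1/2}`. -/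
def gaussianCov {d : ℕ} (B : Matrix (Fin d) (Fin d) ℝ) :
    Measure (EuclideanSpace ℝ (Fin d)) :=
  if hB : B.PosSemidef then (stdGaussian d).map (fun x => Matrix.toEuclideanLin (hB.1.eigenvectorUnitary.1 * Matrix.diagonal ((RCLike.ofReal : ℝ → ℝ) ∘ Real.sqrt ∘ hB.1.eigenvalues) *
      (star hB.1.eigenvectorUnitary : Matrix (Fin d) (Fin d) ℝ)) x)
  else 0

/-- The positive semidefinite square root `B^{1/2}` of a positive semidefinite matrix. -/
def psdSqrt {d : ℕ} (B : Matrix (Fin d) (Fin d) ℝ) : Matrix (Fin d) (Fin d) ℝ :=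
  if hB : B.PosSemidef then (hB.1.eigenvectorUnitary.1 * Matrix.diagonal ((RCLike.ofReal : ℝ → ℝ) ∘ Real.sqrt ∘ hB.1.eigenvalues) *
      (star hB.1.eigenvectorUnitary : Matrix (Fin d) (Fin d) ℝ)) else 0

/-! Expanding `⟨A, xxᵀ⟩ = ∑ A_{ab} x_a x_b`, the entries of `T_μ(A)` are contractions of `A` with
the fourth moment tensor `E[X_k X_l X_i X_j]`. By independence this moment is the product, over the
distinct indices among `k, l, i, j`, of `E[X₁^c]` with `c` the multiplicity of the index. A
multiplicity `1` makes it vanish, so only the three pairings survive, each contributing `1`, plus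
the diagonal `k = l = i = j`, where the value `E X₁⁴` is overcounted by `3` by the pairings. -/

open Finset
open scoped Matrix

section IIDMoments

variable {ι : Type*}

lemma mul_mul_mul_eq_multiset_prod {M : Type*} [CommMonoid M] (y : ι → M) (k l i j : ι) :
    y k * y l * y i * y j = (({k, l, i, j} : Multiset ι).map y).prod := by
  simp [mul_assoc]

variable [DecidableEq ι]

-- Only the coincidence pattern of `k, l, i, j` matters; the proof checks all of them.
lemma prod_count_four_eq_pairings {R : Type*} [CommRing R] (M : ℕ → R) (h1 : M 1 = 0)
    (h2 : M 2 = 1) (k l i j : ι) :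
    ∏ m ∈ ({k, l, i, j} : Multiset ι).toFinset, M (({k, l, i, j} : Multiset ι).count m) =
      (if k = l then 1 else 0) * (if i = j then 1 else 0)
      + (if k = i then 1 else 0) * (if l = j then 1 else 0)
      + (if k = j then 1 else 0) * (if l = i then 1 else 0)
      + (if k = l ∧ l = i ∧ i = j then M 4 - 3 else 0) := by
  by_cases hkl : k = l <;> by_cases hki : k = i <;> by_cases hkj : k = j <;>
    by_cases hli : l = i <;> by_cases hlj : l = j <;> by_cases hij : i = j <;>
    subst_vars <;>
    simp_all [Multiset.count_cons, prod_insert, Ne.symm, one_add_one_eq_two, two_add_one_eq_three]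

variable [Fintype ι]

lemma prod_map_eq_prod_univ_pow_count {M : Type*} [CommMonoid M] (s : Multiset ι) (f : ι → M) :
    (s.map f).prod = ∏ m, f m ^ s.count m := by
  rw [prod_multiset_map_count]
  exact prod_subset (subset_univ _) fun m _ hm => by
    rw [Multiset.count_eq_zero_of_notMem (by simpa using hm), pow_zero]

variable (ν : Measure ℝ) [IsProbabilityMeasure ν]

lemma integral_multiset_prod_pi (s : Multiset ι) :
    ∫ y : ι → ℝ, (s.map y).prod ∂Measure.pi (fun _ => ν) =
      ∏ m ∈ s.toFinset, ∫ x, x ^ s.count m ∂ν := by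
  simp_rw [prod_map_eq_prod_univ_pow_count]
  rw [integral_fintype_prod_eq_prod (fun m (x : ℝ) => x ^ s.count m)]
  refine (prod_subset (subset_univ _) fun m _ hm => ?_).symm
  rw [Multiset.count_eq_zero_of_notMem (by simpa using hm)]
  simp

lemma integrable_multiset_prod_pi (s : Multiset ι)
    (hint : ∀ n ≤ s.card, Integrable (fun x : ℝ => x ^ n) ν) :
    Integrable (fun y : ι → ℝ => (s.map y).prod) (Measure.pi fun _ => ν) := by
  simp_rw [prod_map_eq_prod_univ_pow_count]
  exact Integrable.fintype_prod fun m => hint _ (Multiset.count_le_card m s)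

lemma integrable_pow_of_le_of_even {N : ℕ} (hN : Even N)
    (hint : Integrable (fun x : ℝ => x ^ N) ν) {n : ℕ} (hn : n ≤ N) :
    Integrable (fun x : ℝ => x ^ n) ν := by
  have hnorm : Integrable (fun x : ℝ => ‖x‖ ^ N) ν := by
    simpa [Real.norm_eq_abs, hN.pow_abs] using hint
  have := integrable_norm_pow_of_le aestronglyMeasurable_id hn hnorm
  exact (integrable_norm_iff (by fun_prop)).1 (by simpa [norm_pow] using this)

theorem integral_mul_mul_mul_pi (hmean : ∫ x, x ∂ν = 0) (hvar : ∫ x, x ^ 2 ∂ν = 1)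
    (k l i j : ι) :
    ∫ y : ι → ℝ, y k * y l * y i * y j ∂Measure.pi (fun _ => ν) =
      (if k = l then 1 else 0) * (if i = j then 1 else 0)
      + (if k = i then 1 else 0) * (if l = j then 1 else 0)
      + (if k = j then 1 else 0) * (if l = i then 1 else 0)
      + (if k = l ∧ l = i ∧ i = j then (∫ x, x ^ 4 ∂ν) - 3 else 0) := by
  simp_rw [mul_mul_mul_eq_multiset_prod, integral_multiset_prod_pi]
  exact prod_count_four_eq_pairings (fun n => ∫ x, x ^ n ∂ν) (by simpa using hmean) hvar k l i j

theorem integrable_mul_mul_mul_pi (h4 : Integrable (fun x : ℝ => x ^ 4) ν) (k l i j : ι) :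
    Integrable (fun y : ι → ℝ => y k * y l * y i * y j) (Measure.pi fun _ => ν) := by
  simp_rw [mul_mul_mul_eq_multiset_prod]
  exact integrable_multiset_prod_pi ν _ fun n hn => integrable_pow_of_le_of_even ν (by decide) h4 hn

end IIDMoments

lemma minner_outer {d : ℕ} (A : Matrix (Fin d) (Fin d) ℝ) (x : EuclideanSpace ℝ (Fin d)) :
    minner A (outer x) = ∑ a, ∑ b, A a b * (x a * x b) := by
  simp [minner, outer, Matrix.trace, Matrix.mul_apply, mul_comm]

theorem fourthMomentOp_pi_map {d : ℕ} (ν : Measure ℝ) [IsProbabilityMeasure ν]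
    (hmean : ∫ x, x ∂ν = 0) (hvar : ∫ x, x ^ 2 ∂ν = 1)
    (h4 : Integrable (fun x : ℝ => x ^ 4) ν) (A : Matrix (Fin d) (Fin d) ℝ) :
    fourthMomentOp
        ((Measure.pi fun _ : Fin d => ν).map (MeasurableEquiv.toLp 2 (Fin d → ℝ))) A =
      A + Aᵀ + Matrix.trace A • (1 : Matrix (Fin d) (Fin d) ℝ) +
        ((∫ x, x ^ 4 ∂ν) - 3) • Matrix.diagonal (fun i => A i i) := by
  ext i j
  have hint (a b : Fin d) := (integrable_mul_mul_mul_pi ν h4 a b i j).const_mul (A a b)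
  calc fourthMomentOp _ A i j
      = ∫ y : Fin d → ℝ, ∑ a, ∑ b, A a b * (y a * y b * y i * y j)
          ∂Measure.pi (fun _ => ν) := by
        simp only [fourthMomentOp, mIntegral, Matrix.of_apply, integral_map_equiv, minner_outer]
        congr 1 with y
        simp only [outer, Matrix.smul_apply, Matrix.of_apply, smul_eq_mul,
          MeasurableEquiv.toLp_apply, sum_mul]
        exact sum_congr rfl fun a _ => sum_congr rfl fun b _ => by ring
    _ = ∑ a, ∑ b, A a b * ∫ y : Fin d → ℝ, y a * y b * y i * y j ∂Measure.pi (fun _ => ν) := by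
        rw [integral_finsetSum _ fun a _ => integrable_finsetSum _ fun b _ => hint a b]
        simp_rw [integral_finsetSum _ fun b _ => hint _ b, integral_const_mul]
    _ = _ := by
        simp_rw [integral_mul_mul_mul_pi ν hmean hvar]
        by_cases hij : i = j
        · subst hij
          simp only [↓reduceIte, mul_one, mul_ite, mul_zero, and_true, ite_and, mul_add,
            sum_add_distrib, sum_ite_eq, mem_univ, sum_ite_eq', Matrix.trace, Matrix.diag_apply,
            Matrix.add_apply, Matrix.transpose_apply, Matrix.smul_apply, Matrix.one_apply_eq,
            smul_eq_mul, Matrix.diagonal_apply_eq]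
          ring
        · simp [mul_add, sum_add_distrib, hij]

/-- for `μ` the distribution of a vector with i.i.d. coordinates of mean `0`,
variance `1` and fourth moment `m₄`, one has
`T_μ(A) = 2A + Tr(A)·I + (m₄ - 3)·diag(A)` for all symmetric `A`. -/
theorem fourthMomentOp_iid
    (d : ℕ) (ν : Measure ℝ) [IsProbabilityMeasure ν]
    (hmean : ∫ x, x ∂ν = 0) (hvar : ∫ x, x ^ 2 ∂ν = 1)
    (h4 : Integrable (fun x : ℝ => x ^ 4) ν)
    (A : Matrix (Fin d) (Fin d) ℝ) (hA : A.IsSymm) :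
    fourthMomentOp
        ((Measure.pi fun _ : Fin d => ν).map (MeasurableEquiv.toLp 2 (Fin d → ℝ)))
        A =
      (2 : ℝ) • A + Matrix.trace A • (1 : Matrix (Fin d) (Fin d) ℝ) +
        ((∫ x, x ^ 4 ∂ν) - 3) • Matrix.diagonal (fun i => A i i) := by
  rw [fourthMomentOp_pi_map ν hmean hvar h4 A, hA.eq, two_smul]

end
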